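/- arXiv:1806.01426 — 6 statements merged into one kernel-verified Lean document; each statement's English description precedes it below -/
import Mathlib

section
/- If f and g are continuous, strictly log-concave, positive functions on the real line, then their convolution h(y) = ∫ f(y-x) g(x) dx is strictly log-concave: for all y₁ ≠ y₂ and 0 < λ < 1, h(λy₁ + (1-λ)y₂) > h(y₁)^λ · h(y₂)^(1-λ). -/
open MeasureTheory

/-- Strict log-concavity of a positive function on ℝ. -/
def StrictLogConcave (f : ℝ → ℝ) : Prop :=
  ∀ x y l : ℝ, x ≠ y → 0 < l → l < 1 →
    f (l * x + (1 - l) * y) > f x ^ l * f y ^ (1 - l)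

/-! Writing `h y ^ 2 - h (y - v) * h (y + v)` as half the integral over `ℝ²` of
`(f (y - s) f (y + v - t) - f (y - t) f (y + v - s)) * (g s g (t - v) - g t g (s - v))`, whose
factors have the same sign off the diagonal by strict log-concavity of `f` and `g`, shows that
`log h` is strictly midpoint concave. By Fatou's lemma `h` is lower semicontinuous, and a lower
semicontinuous midpoint-concave function is continuous. Finally a continuous strictly
midpoint-concave function is strictly concave, because its difference with a chord cannot attain
an interior minimum. -/

open Filter Function Real Set Topology
open scoped ENNReal

theorem StrictLogConcave.mul_lt_mul_of_add_eq {f : ℝ → ℝ} (hf : StrictLogConcave f)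
    (hpos : ∀ x, 0 < f x) {a b c d : ℝ} (hsum : a + b = c + d) (hca : c < a) (hcb : c < b) :
    f c * f d < f a * f b := by
  have hcd : c < d := by linarith
  have hdc : 0 < d - c := sub_pos.2 hcd
  set l := (d - a) / (d - c) with hl
  have hl0 : 0 < l := div_pos (by linarith) hdc
  have hl1 : l < 1 := (div_lt_one hdc).2 (by linarith)
  have ha : l * c + (1 - l) * d = a := by rw [hl]; field_simp; ring
  have hb : l * d + (1 - l) * c = b := by
    rw [hl]; field_simp; linear_combination (c - d) * hsum
  have hfa := hf c d l hcd.ne hl0 hl1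
  have hfb := hf d c l hcd.ne' hl0 hl1
  rw [ha] at hfa
  rw [hb] at hfb
  have hsplit : ∀ x : ℝ, 0 < x → x ^ l * x ^ (1 - l) = x := fun x hx => by
    rw [← rpow_add hx, add_sub_cancel, rpow_one]
  have hfc := hpos c
  have hfd := hpos d
  calc f c * f d = (f c ^ l * f c ^ (1 - l)) * (f d ^ l * f d ^ (1 - l)) := by
        rw [hsplit _ hfc, hsplit _ hfd]
    _ = (f c ^ l * f d ^ (1 - l)) * (f d ^ l * f c ^ (1 - l)) := by ring
    _ < f a * f b := mul_lt_mul'' hfa hfb (by positivity) (by positivity)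

theorem StrictLogConcave.of_strictConcaveOn_log {f : ℝ → ℝ} (hpos : ∀ x, 0 < f x)
    (hf : StrictConcaveOn ℝ univ fun x => log (f x)) : StrictLogConcave f := by
  intro x y l hxy hl0 hl1
  have hlog := hf.2 (mem_univ x) (mem_univ y) hxy hl0 (sub_pos.2 hl1) (add_sub_cancel l 1)
  simp only [smul_eq_mul] at hlog
  rw [gt_iff_lt, rpow_def_of_pos (hpos x), rpow_def_of_pos (hpos y), ← exp_add,
    ← exp_log (hpos (l * x + (1 - l) * y))]
  exact exp_lt_exp.2 (by linarith)

/-- A continuous analogue of Chebyshev's sum inequality: the cross term integrates to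
`2 * (∫ u₁ w₁ * ∫ u₂ w₂ - ∫ u₁ w₂ * ∫ u₂ w₁)`. -/
theorem integral_mul_integral_lt_integral_mul_integral {α : Type*} [MeasurableSpace α]
    {μ : Measure α} [SFinite μ] {u₁ u₂ w₁ w₂ : α → ℝ}
    (h₁₁ : Integrable (fun x => u₁ x * w₁ x) μ) (h₁₂ : Integrable (fun x => u₁ x * w₂ x) μ)
    (h₂₁ : Integrable (fun x => u₂ x * w₁ x) μ) (h₂₂ : Integrable (fun x => u₂ x * w₂ x) μ)
    (hT : ∀ s t, 0 ≤ (u₁ s * u₂ t - u₁ t * u₂ s) * (w₁ s * w₂ t - w₁ t * w₂ s))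
    (hpos : 0 < μ.prod μ (support fun p : α × α =>
      (u₁ p.1 * u₂ p.2 - u₁ p.2 * u₂ p.1) * (w₁ p.1 * w₂ p.2 - w₁ p.2 * w₂ p.1))) :
    (∫ x, u₁ x * w₂ x ∂μ) * (∫ x, u₂ x * w₁ x ∂μ) <
      (∫ x, u₁ x * w₁ x ∂μ) * (∫ x, u₂ x * w₂ x ∂μ) := by
  have hexp : (fun p : α × α =>
      (u₁ p.1 * u₂ p.2 - u₁ p.2 * u₂ p.1) * (w₁ p.1 * w₂ p.2 - w₁ p.2 * w₂ p.1)) =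
      fun p => u₁ p.1 * w₁ p.1 * (u₂ p.2 * w₂ p.2) - u₁ p.1 * w₂ p.1 * (u₂ p.2 * w₁ p.2)
        - u₂ p.1 * w₁ p.1 * (u₁ p.2 * w₂ p.2) + u₂ p.1 * w₂ p.1 * (u₁ p.2 * w₁ p.2) := by
    funext p; ring
  have i₁ := h₁₁.mul_prod h₂₂
  have i₂ := h₁₂.mul_prod h₂₁
  have i₃ := h₂₁.mul_prod h₁₂
  have i₄ := h₂₂.mul_prod h₁₁
  have hint : Integrable (fun p : α × α =>
      (u₁ p.1 * u₂ p.2 - u₁ p.2 * u₂ p.1) * (w₁ p.1 * w₂ p.2 - w₁ p.2 * w₂ p.1)) (μ.prod μ) := by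
    rw [hexp]; exact ((i₁.sub i₂).sub i₃).add i₄
  have hcross := (integral_pos_iff_support_of_nonneg (fun p : α × α => hT p.1 p.2) hint).2 hpos
  rw [hexp, integral_add (by exact (i₁.sub i₂).sub i₃) i₄, integral_sub (by exact i₁.sub i₂) i₃,
    integral_sub i₁ i₂, integral_prod_mul (fun x => u₁ x * w₁ x) (fun x => u₂ x * w₂ x),
    integral_prod_mul (fun x => u₁ x * w₂ x) (fun x => u₂ x * w₁ x),
    integral_prod_mul (fun x => u₂ x * w₁ x) (fun x => u₁ x * w₂ x),
    integral_prod_mul (fun x => u₂ x * w₂ x) (fun x => u₁ x * w₁ x)] at hcross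
  linarith

theorem convolution_mul_lt_sq {f g : ℝ → ℝ} (hf_pos : ∀ x, 0 < f x) (hg_pos : ∀ x, 0 < g x)
    (hf_slc : StrictLogConcave f) (hg_slc : StrictLogConcave g)
    (hint : ∀ y : ℝ, Integrable (fun x => f (y - x) * g x)) {v : ℝ} (hv : 0 < v) (y : ℝ) :
    (∫ x, f (y - v - x) * g x) * (∫ x, f (y + v - x) * g x) < (∫ x, f (y - x) * g x) ^ 2 := by
  have hshift : ∀ c, (fun x => f (c - x) * g (x - v)) = fun x => f (c - v - (x - v)) * g (x - v) :=
    fun c => by simp only [sub_sub_sub_cancel_right]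
  have hT_pos : ∀ s t, s < t → 0 < (f (y - s) * f (y + v - t) - f (y - t) * f (y + v - s)) *
      (g s * g (t - v) - g t * g (s - v)) := by
    intro s t hst
    have hf' := hf_slc.mul_lt_mul_of_add_eq hf_pos (a := y - s) (b := y + v - t) (c := y - t)
      (d := y + v - s) (by ring) (by linarith) (by linarith)
    have hg' := hg_slc.mul_lt_mul_of_add_eq hg_pos (a := s) (b := t - v) (c := s - v) (d := t)
      (by ring) (by linarith) (by linarith)
    exact mul_pos (by linarith) (by linarith)
  have hdiag : {p : ℝ × ℝ | p.1 < p.2} ⊆ support fun p : ℝ × ℝ =>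
      (f (y - p.1) * f (y + v - p.2) - f (y - p.2) * f (y + v - p.1)) *
      (g p.1 * g (p.2 - v) - g p.2 * g (p.1 - v)) := fun p hp => (hT_pos p.1 p.2 hp).ne'
  have key := integral_mul_integral_lt_integral_mul_integral (μ := volume)
    (u₁ := fun x => f (y - x)) (u₂ := fun x => f (y + v - x)) (w₁ := g) (w₂ := fun x => g (x - v))
    (hint y) (by rw [hshift]; exact (hint _).comp_sub_right v) (hint _)
    (by rw [hshift]; exact (hint _).comp_sub_right v)
    (fun s t => by
      rcases lt_trichotomy s t with hst | rfl | hst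
      · exact (hT_pos s t hst).le
      · simp
      · linarith [hT_pos t s hst])
    ((isOpen_lt continuous_fst continuous_snd).measure_pos _ ⟨(0, 1), zero_lt_one⟩ |>.trans_le
      (measure_mono hdiag))
  rw [hshift, hshift, integral_sub_right_eq_self (fun x => f (y - v - x) * g x),
    integral_sub_right_eq_self (fun x => f (y + v - v - x) * g x), add_sub_cancel_right] at key
  linarith

theorem lowerSemicontinuous_lintegral {X α : Type*} [TopologicalSpace X]
    [FirstCountableTopology X] [MeasurableSpace α] {μ : Measure α} {F : X → α → ℝ≥0∞}
    (hF_meas : ∀ x, AEMeasurable (F x) μ) (hF : ∀ a, LowerSemicontinuous fun x => F x a) :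
    LowerSemicontinuous fun x => ∫⁻ a, F x a ∂μ := by
  refine lowerSemicontinuous_iff_le_liminf.2 fun x => ?_
  calc ∫⁻ a, F x a ∂μ ≤ ∫⁻ a, liminf (fun x' => F x' a) (𝓝 x) ∂μ :=
        lintegral_mono fun a => lowerSemicontinuous_iff_le_liminf.1 (hF a) x
    _ ≤ liminf (fun x' => ∫⁻ a, F x' a ∂μ) (𝓝 x) := lintegral_liminf_le' hF_meas

theorem lowerSemicontinuous_integral_of_nonneg {X α : Type*} [TopologicalSpace X]
    [FirstCountableTopology X] [MeasurableSpace α] {μ : Measure α} {F : X → α → ℝ}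
    (hF_nonneg : ∀ x a, 0 ≤ F x a) (hF_int : ∀ x, Integrable (F x) μ)
    (hF : ∀ a, LowerSemicontinuous fun x => F x a) :
    LowerSemicontinuous fun x => ∫ a, F x a ∂μ := by
  have hL := lowerSemicontinuous_lintegral (μ := μ)
    (fun x => (hF_int x).aemeasurable.ennreal_ofReal) fun a x =>
      ENNReal.continuous_ofReal.continuousAt.comp_lowerSemicontinuousAt (hF a x)
        ENNReal.ofReal_mono
  have heq : ∀ x, ∫ a, F x a ∂μ = (∫⁻ a, ENNReal.ofReal (F x a) ∂μ).toReal := fun x =>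
    integral_eq_lintegral_of_nonneg_ae (ae_of_all _ (hF_nonneg x)) (hF_int x).aestronglyMeasurable
  intro x r (hr : r < ∫ a, F x a ∂μ)
  show ∀ᶠ x' in 𝓝 x, r < ∫ a, F x' a ∂μ
  rcases lt_or_ge r 0 with hr0 | hr0
  · exact Eventually.of_forall fun x' => hr0.trans_le (integral_nonneg (hF_nonneg x'))
  have hfin : ∀ x, ∫⁻ a, ENNReal.ofReal (F x a) ∂μ ≠ ∞ := fun x =>
    (hF_int x).lintegral_lt_top.ne
  rw [heq, ← ENNReal.ofReal_lt_iff_lt_toReal hr0 (hfin x)] at hr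
  filter_upwards [hL x _ hr] with x' hx'
  rw [heq, ← ENNReal.ofReal_lt_iff_lt_toReal hr0 (hfin x')]
  exact hx'

theorem LowerSemicontinuous.log {X : Type*} [TopologicalSpace X] {f : X → ℝ}
    (hf : LowerSemicontinuous f) (hpos : ∀ x, 0 < f x) :
    LowerSemicontinuous fun x => log (f x) := fun x _ hr =>
  (hf x _ ((lt_log_iff_exp_lt (hpos x)).1 hr)).mono fun _ hx' =>
    (lt_log_iff_exp_lt (hpos _)).2 hx'

/-- A midpoint-concave lower semicontinuous function is upper semicontinuous, since
`φ (y + t) ≤ 2 φ y - φ (y - t)` and `φ (y - t)` is almost at least `φ y` for small `t`. -/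
theorem continuous_of_lowerSemicontinuous_of_add_le {E : Type*} [TopologicalSpace E]
    [AddCommGroup E] [IsTopologicalAddGroup E] {φ : E → ℝ} (hφ : LowerSemicontinuous φ)
    (hmid : ∀ y t, φ (y - t) + φ (y + t) ≤ 2 * φ y) : Continuous φ := by
  refine continuous_iff_continuousAt.2 fun y =>
    continuousAt_iff_lower_upperSemicontinuousAt.2 ⟨hφ y, fun r hr => ?_⟩
  have hreflect : Tendsto (fun z => y - (z - y)) (𝓝 y) (𝓝 y) := by
    have hcont : Continuous fun z : E => y - (z - y) := by fun_prop
    exact hcont.tendsto' y y (by simp)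
  filter_upwards [hreflect.eventually (hφ y (2 * φ y - r) (by linarith))] with z hz
  have := hmid y (z - y)
  rw [add_sub_cancel] at this
  linarith

theorem min_lt_of_add_lt_two_mul {g : ℝ → ℝ} (hg : Continuous g)
    (hmid : ∀ y t, t ≠ 0 → g (y - t) + g (y + t) < 2 * g y) {x y z : ℝ} (hxy : x < y)
    (hyz : y < z) : min (g x) (g z) < g y := by
  have no_interior_min : ∀ t ∈ Ioo x z, ¬ IsMinOn g (Icc x z) t := by
    rintro t ⟨hxt, htz⟩ hmin
    set r := min (t - x) (z - t)
    have hr : 0 < r := lt_min (sub_pos.2 hxt) (sub_pos.2 htz)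
    have hrx : r ≤ t - x := min_le_left _ _
    have hrz : r ≤ z - t := min_le_right _ _
    have hleft := isMinOn_iff.1 hmin (t - r) ⟨by linarith, by linarith⟩
    have hright := isMinOn_iff.1 hmin (t + r) ⟨by linarith, by linarith⟩
    linarith [hmid t r hr.ne']
  obtain ⟨t, ht, hmin⟩ := isCompact_Icc.exists_isMinOn (nonempty_Icc.2 (hxy.trans hyz).le)
    hg.continuousOn
  by_contra! hle
  rcases eq_endpoints_or_mem_Ioo_of_mem_Icc ht with rfl | rfl | ht
  · exact no_interior_min y ⟨hxy, hyz⟩ (isMinOn_iff.2 fun u hu =>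
      (hle.trans (min_le_left _ _)).trans (isMinOn_iff.1 hmin u hu))
  · exact no_interior_min y ⟨hxy, hyz⟩ (isMinOn_iff.2 fun u hu =>
      (hle.trans (min_le_right _ _)).trans (isMinOn_iff.1 hmin u hu))
  · exact no_interior_min t ht hmin

theorem strictConcaveOn_univ_of_add_lt_two_mul {φ : ℝ → ℝ} (hφ : Continuous φ)
    (hmid : ∀ y t, t ≠ 0 → φ (y - t) + φ (y + t) < 2 * φ y) : StrictConcaveOn ℝ univ φ := by
  refine strictConcaveOn_of_slope_strict_anti_adjacent convex_univ fun {x y z} _ _ hxy hyz => ?_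
  set k := (φ z - φ x) / (z - x)
  have hchord : φ x - k * x = φ z - k * z := by
    simp only [k]; field_simp [(sub_pos.2 (hxy.trans hyz)).ne']; ring
  have hmin := min_lt_of_add_lt_two_mul (g := fun t => φ t - k * t) (by fun_prop)
    (fun y t ht => by linarith [hmid y t ht]) hxy hyz
  simp only [hchord, min_self] at hmin
  calc (φ z - φ y) / (z - y) < k := by rw [div_lt_iff₀ (sub_pos.2 hyz)]; linarith
    _ < (φ y - φ x) / (y - x) := by rw [lt_div_iff₀ (sub_pos.2 hxy)]; linarith

theorem convolution_strictLogConcave_general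
    (f g : ℝ → ℝ)
    (hf_cont : Continuous f)
    (hf_pos : ∀ x, 0 < f x) (hg_pos : ∀ x, 0 < g x)
    (hf_slc : StrictLogConcave f) (hg_slc : StrictLogConcave g)
    (hint : ∀ y : ℝ, Integrable (fun x => f (y - x) * g x))
    (h : ℝ → ℝ) (hh : ∀ y, h y = ∫ x : ℝ, f (y - x) * g x) :
    StrictLogConcave h := by
  have hpos : ∀ y, 0 < h y := fun y => by
    rw [hh, integral_pos_iff_support_of_nonneg (fun x => (mul_pos (hf_pos _) (hg_pos _)).le)
      (hint y), support_eq_univ fun x => (mul_pos (hf_pos _) (hg_pos _)).ne', volume_univ]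
    exact ENNReal.zero_lt_top
  have hlsc : LowerSemicontinuous h := by
    rw [funext hh]
    exact lowerSemicontinuous_integral_of_nonneg (fun _ _ => (mul_pos (hf_pos _) (hg_pos _)).le)
      hint fun x => (show Continuous fun y => f (y - x) * g x by fun_prop).lowerSemicontinuous
  have hmid : ∀ y t, t ≠ 0 → log (h (y - t)) + log (h (y + t)) < 2 * log (h y) := by
    intro y t ht
    rw [two_mul, ← log_mul (hpos _).ne' (hpos _).ne', ← log_mul (hpos _).ne' (hpos _).ne']
    refine log_lt_log (mul_pos (hpos _) (hpos _)) ?_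
    rcases ht.lt_or_gt with ht | ht
    · simpa [hh, sq, mul_comm, sub_neg_eq_add, ← sub_eq_add_neg] using
        convolution_mul_lt_sq hf_pos hg_pos hf_slc hg_slc hint (neg_pos.2 ht) y
    · simpa [hh, sq] using convolution_mul_lt_sq hf_pos hg_pos hf_slc hg_slc hint ht y
  refine StrictLogConcave.of_strictConcaveOn_log hpos
    (strictConcaveOn_univ_of_add_lt_two_mul ?_ hmid)
  refine continuous_of_lowerSemicontinuous_of_add_le (hlsc.log hpos) fun y t => ?_
  rcases eq_or_ne t 0 with rfl | ht
  · simp [two_mul]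
  · exact (hmid y t ht).le

theorem convolution_strictLogConcave
    (f g : ℝ → ℝ)
    (hf_cont : Continuous f) (hg_cont : Continuous g)
    (hf_pos : ∀ x, 0 < f x) (hg_pos : ∀ x, 0 < g x)
    (hf_slc : StrictLogConcave f) (hg_slc : StrictLogConcave g)
    (hint : ∀ y : ℝ, Integrable (fun x => f (y - x) * g x))
    (h : ℝ → ℝ) (hh : ∀ y, h y = ∫ x : ℝ, f (y - x) * g x) :
    StrictLogConcave h :=
  convolution_strictLogConcave_general f g hf_cont hf_pos hg_pos hf_slc hg_slc hint h hh
end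

section
/- If h : ℝ² → ℝ is a positive strictly log-concave function (jointly in both variables), then the marginal h*(y) = ∫ h(x,y) dx is strictly log-concave on ℝ: for all y₁ ≠ y₂ and 0 < λ < 1, h*(λy₁+(1-λ)y₂) > h*(y₁)^λ h*(y₂)^(1-λ). -/
open MeasureTheory

/-- Strict log-concavity of a positive function on ℝ². -/
def StrictLogConcave2 (h : ℝ × ℝ → ℝ) : Prop :=
  ∀ p q : ℝ × ℝ, ∀ l : ℝ, p ≠ q → 0 < l → l < 1 →
    h (l • p + (1 - l) • q) > h p ^ l * h q ^ (1 - l)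

/-!
Slices of a strictly log-concave function are log-concave, hence continuous, and the claim is a
strict one-dimensional Prékopa–Leindler inequality for `f = h(·, y₁)`, `g = h(·, y₂)` and
`H = h(·, l y₁ + (1 - l) y₂)`, proved by transport of mass. With `F`, `G` the distribution
functions of `f`, `g` and `c = ∫ g / ∫ f`, the map `T` defined by `G (T x) = c F x` satisfies
`T' = c f / g ∘ T`. For `w = l id + (1 - l) T`, weighted AM–GM gives `T' ^ (1 - l) ≤ w'`,
hence pointwise `c ^ (1 - l) f = T' ^ (1 - l) f ^ l (g ∘ T) ^ (1 - l) < w' · H ∘ w`.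
Integrating and changing variables by `w`,
`(∫ f) ^ l (∫ g) ^ (1 - l) = c ^ (1 - l) ∫ f < ∫ w' · H ∘ w ≤ ∫ H`.
-/

open Set Filter Topology

theorem integral_lt_integral_of_forall_lt {α : Type*} [MeasurableSpace α] {μ : Measure α}
    [NeZero μ] {f g : α → ℝ} (hf : Integrable f μ) (hg : Integrable g μ)
    (hlt : ∀ x, f x < g x) : ∫ x, f x ∂μ < ∫ x, g x ∂μ := by
  have hsupp : Function.support (g - f) = univ :=
    eq_univ_of_forall fun x => (sub_pos.mpr (hlt x)).ne'
  have hpos : 0 < ∫ x, (g - f) x ∂μ := by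
    rw [integral_pos_iff_support_of_nonneg (f := g - f) (fun x => (sub_pos.mpr (hlt x)).le)
      (hg.sub hf), hsupp]
    exact Measure.measure_univ_pos.mpr (NeZero.ne μ)
  rw [Pi.sub_def, integral_sub hg hf] at hpos
  linarith

theorem integral_pos_of_forall_pos {α : Type*} [MeasurableSpace α] {μ : Measure α} [NeZero μ]
    {f : α → ℝ} (hf : Integrable f μ) (hpos : ∀ x, 0 < f x) : 0 < ∫ x, f x ∂μ := by
  simpa using integral_lt_integral_of_forall_lt (integrable_zero α ℝ μ) hf hpos

theorem StrictMono.hasDerivAt_invFun {G : ℝ → ℝ} {G' z : ℝ} (hG : StrictMono G)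
    (hd : HasDerivAt G G' (Function.invFun G z)) (h0 : G' ≠ 0) (hz : range G ∈ 𝓝 z) :
    HasDerivAt (Function.invFun G) G'⁻¹ z := by
  have hleft : Function.LeftInverse (Function.invFun G) G :=
    Function.leftInverse_invFun hG.injective
  have hmono : StrictMonoOn (Function.invFun G) (range G) := by
    rintro _ ⟨a, rfl⟩ _ ⟨b, rfl⟩ hab
    rw [hleft a, hleft b]
    exact hG.lt_iff_lt.mp hab
  have hcont : ContinuousAt (Function.invFun G) z := by
    refine hmono.continuousAt_of_image_mem_nhds hz ?_
    rw [← range_comp, hleft.comp_eq_id, range_id]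
    exact univ_mem
  exact hd.of_local_left_inverse hcont h0 (eventually_of_mem hz fun y hy => Function.invFun_eq hy)

noncomputable def integralIic (f : ℝ → ℝ) (x : ℝ) : ℝ := ∫ t in Iic x, f t

section integralIic

variable {f : ℝ → ℝ}

theorem integralIic_add_intervalIntegral (hf : Integrable f) (a b : ℝ) :
    integralIic f a + ∫ t in a..b, f t = integralIic f b := by
  rw [← intervalIntegral.integral_Iic_sub_Iic hf.integrableOn hf.integrableOn, integralIic,
    integralIic, add_sub_cancel]

theorem hasDerivAt_integralIic (hfc : Continuous f) (hf : Integrable f) (x : ℝ) :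
    HasDerivAt (integralIic f) (f x) x := by
  have hint : HasDerivAt (fun b => ∫ t in (0 : ℝ)..b, f t) (f x) x :=
    intervalIntegral.integral_hasDerivAt_right hf.intervalIntegrable
      (hfc.stronglyMeasurableAtFilter _ _) hfc.continuousAt
  exact (hint.const_add (integralIic f 0)).congr_of_eventuallyEq
    (Eventually.of_forall fun b => (integralIic_add_intervalIntegral hf 0 b).symm)

theorem strictMono_integralIic (hf : Integrable f) (hpos : ∀ x, 0 < f x) :
    StrictMono (integralIic f) := fun a b hab => by
  rw [← integralIic_add_intervalIntegral hf a b, lt_add_iff_pos_right]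
  exact intervalIntegral.intervalIntegral_pos_of_pos_on hf.intervalIntegrable
    (fun x _ => hpos x) hab

theorem tendsto_integralIic_atBot (hf : Integrable f) :
    Tendsto (integralIic f) atBot (𝓝 0) := by
  have hlim := (tendsto_const_nhds (x := integralIic f 0)).sub
    (intervalIntegral_tendsto_integral_Iic 0 hf.integrableOn tendsto_id)
  rw [integralIic, sub_self] at hlim
  refine hlim.congr fun a => ?_
  rw [← integralIic, ← integralIic_add_intervalIntegral hf a 0, id, add_sub_cancel_right]

theorem tendsto_integralIic_atTop (hf : Integrable f) :
    Tendsto (integralIic f) atTop (𝓝 (∫ t, f t)) := by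
  have hlim := intervalIntegral_tendsto_integral_Ioi 0 hf.integrableOn tendsto_id
  rw [← intervalIntegral.integral_Iic_add_Ioi hf.integrableOn hf.integrableOn]
  exact (tendsto_const_nhds.add hlim).congr (integralIic_add_intervalIntegral hf 0)

theorem range_integralIic (hfc : Continuous f) (hf : Integrable f) (hpos : ∀ x, 0 < f x) :
    range (integralIic f) = Ioo 0 (∫ t, f t) := by
  have hmono := strictMono_integralIic hf hpos
  refine Subset.antisymm ?_ fun z hz => ?_
  · rintro _ ⟨x, rfl⟩
    exact ⟨(hmono.monotone.le_of_tendsto (tendsto_integralIic_atBot hf) (x - 1)).trans_lt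
        (hmono (sub_one_lt x)),
      (hmono (lt_add_one x)).trans_le
        (hmono.monotone.ge_of_tendsto (tendsto_integralIic_atTop hf) (x + 1))⟩
  · have hcont : Continuous (integralIic f) := continuous_iff_continuousAt.mpr fun x =>
      (hasDerivAt_integralIic hfc hf x).continuousAt
    exact mem_range_of_exists_le_of_exists_ge hcont
      (((tendsto_integralIic_atBot hf).eventually (eventually_le_nhds hz.1)).exists)
      (((tendsto_integralIic_atTop hf).eventually (eventually_ge_nhds hz.2)).exists)

end integralIic

theorem exists_hasDerivAt_transport {f g : ℝ → ℝ} (hfc : Continuous f) (hf : Integrable f)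
    (hfpos : ∀ x, 0 < f x) (hgc : Continuous g) (hg : Integrable g) (hgpos : ∀ x, 0 < g x) :
    ∃ T : ℝ → ℝ, ∀ x,
      HasDerivAt T ((∫ t, g t) / (∫ t, f t) * f x / g (T x)) x := by
  set c := (∫ t, g t) / (∫ t, f t)
  have hrange_f := range_integralIic hfc hf hfpos
  have hrange_g := range_integralIic hgc hg hgpos
  have hF : ∀ x, integralIic f x ∈ Ioo 0 (∫ t, f t) := fun x => hrange_f ▸ mem_range_self x
  have hc : 0 < c := div_pos (integral_pos_of_forall_pos hg hgpos)
    (integral_pos_of_forall_pos hf hfpos)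
  have hcF : ∀ x, c * integralIic f x ∈ range (integralIic g) := fun x => by
    rw [hrange_g]
    refine ⟨mul_pos hc (hF x).1, ?_⟩
    calc c * integralIic f x < c * ∫ t, f t := mul_lt_mul_of_pos_left (hF x).2 hc
      _ = ∫ t, g t := div_mul_cancel₀ _ (integral_pos_of_forall_pos hf hfpos).ne'
  refine ⟨fun x => Function.invFun (integralIic g) (c * integralIic f x), fun x => ?_⟩
  have hinv := (strictMono_integralIic hg hgpos).hasDerivAt_invFun
    (hasDerivAt_integralIic hgc hg _) (hgpos _).ne'
    (hrange_g ▸ isOpen_Ioo.mem_nhds (hrange_g ▸ hcF x))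
  exact (hinv.comp x ((hasDerivAt_integralIic hfc hf x).const_mul c)).congr_deriv
    (inv_mul_eq_div _ _)

section changeOfVariables

variable {w w' H : ℝ → ℝ}

theorem integrable_abs_deriv_mul_comp (hw : ∀ x, HasDerivAt w (w' x) x)
    (hinj : Function.Injective w) (hH : Integrable H) :
    Integrable fun x => |w' x| * H (w x) := by
  rw [← integrableOn_univ]
  exact (integrableOn_image_iff_integrableOn_abs_deriv_smul MeasurableSet.univ
    (fun x _ => (hw x).hasDerivWithinAt) hinj.injOn H).mp hH.integrableOn

theorem integral_abs_deriv_mul_comp_le (hw : ∀ x, HasDerivAt w (w' x) x)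
    (hinj : Function.Injective w) (hH : Integrable H) (hH0 : ∀ x, 0 ≤ H x) :
    ∫ x, |w' x| * H (w x) ≤ ∫ x, H x := by
  have hcov := integral_image_eq_integral_abs_deriv_smul MeasurableSet.univ
    (fun x _ => (hw x).hasDerivWithinAt) hinj.injOn H
  simp only [setIntegral_univ, smul_eq_mul] at hcov
  rw [← hcov]
  exact setIntegral_le_integral hH (Eventually.of_forall hH0)

end changeOfVariables

theorem rpow_one_sub_mul_le_arith_mean_mul_geom_mean {l c u v : ℝ} (hl0 : 0 ≤ l) (hl1 : l ≤ 1)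
    (hc : 0 < c) (hu : 0 < u) (hv : 0 < v) :
    c ^ (1 - l) * u ≤ (l + (1 - l) * (c * u / v)) * (u ^ l * v ^ (1 - l)) := by
  have hcuv : 0 < c * u / v := by positivity
  have amgm : (c * u / v) ^ (1 - l) ≤ l + (1 - l) * (c * u / v) := by
    simpa using Real.geom_mean_le_arith_mean2_weighted hl0 (sub_nonneg.2 hl1) zero_le_one
      hcuv.le (add_sub_cancel l 1)
  calc c ^ (1 - l) * u = (c * u / v) ^ (1 - l) * (u ^ l * v ^ (1 - l)) := by
        rw [Real.div_rpow (by positivity) hv.le, Real.mul_rpow hc.le hu.le]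
        field_simp
        rw [← Real.rpow_add hu, sub_add_cancel, Real.rpow_one]
    _ ≤ (l + (1 - l) * (c * u / v)) * (u ^ l * v ^ (1 - l)) :=
        mul_le_mul_of_nonneg_right amgm (by positivity)

theorem integral_rpow_mul_rpow_lt_integral {f g H : ℝ → ℝ} {l : ℝ}
    (hl0 : 0 < l) (hl1 : l < 1) (hfc : Continuous f) (hf : Integrable f) (hfpos : ∀ x, 0 < f x)
    (hgc : Continuous g) (hg : Integrable g) (hgpos : ∀ x, 0 < g x) (hH : Integrable H)
    (hfgH : ∀ x y, f x ^ l * g y ^ (1 - l) < H (l * x + (1 - l) * y)) :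
    (∫ x, f x) ^ l * (∫ x, g x) ^ (1 - l) < ∫ x, H x := by
  obtain ⟨T, hT⟩ := exists_hasDerivAt_transport hfc hf hfpos hgc hg hgpos
  set c := (∫ t, g t) / (∫ t, f t)
  have hfint := integral_pos_of_forall_pos hf hfpos
  have hc : 0 < c := div_pos (integral_pos_of_forall_pos hg hgpos) hfint
  set w := fun x => l * x + (1 - l) * T x
  set w' := fun x => l + (1 - l) * (c * f x / g (T x))
  have hw : ∀ x, HasDerivAt w (w' x) x := fun x =>
    (((hasDerivAt_id' x).const_mul l).add ((hT x).const_mul (1 - l))).congr_deriv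
      (by rw [mul_one])
  have hw'pos : ∀ x, 0 < w' x := fun x =>
    add_pos hl0 (mul_pos (sub_pos.2 hl1) (div_pos (mul_pos hc (hfpos x)) (hgpos (T x))))
  have hinj : Function.Injective w :=
    (strictMono_of_deriv_pos fun x => (hw x).deriv ▸ hw'pos x).injective
  have hH0 : ∀ z, 0 ≤ H z := fun z => by
    simpa [← add_mul] using (mul_pos (Real.rpow_pos_of_pos (hfpos z) l)
      (Real.rpow_pos_of_pos (hgpos z) (1 - l))).trans (hfgH z z) |>.le
  have hpointwise : ∀ x, c ^ (1 - l) * f x < |w' x| * H (w x) := fun x =>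
    calc c ^ (1 - l) * f x ≤ w' x * (f x ^ l * g (T x) ^ (1 - l)) :=
          rpow_one_sub_mul_le_arith_mean_mul_geom_mean hl0.le hl1.le hc (hfpos x)
            (hgpos (T x))
      _ < w' x * H (w x) := mul_lt_mul_of_pos_left (hfgH x (T x)) (hw'pos x)
      _ = |w' x| * H (w x) := by rw [abs_of_pos (hw'pos x)]
  calc (∫ x, f x) ^ l * (∫ x, g x) ^ (1 - l) = c ^ (1 - l) * ∫ x, f x := by
        rw [Real.div_rpow (integral_pos_of_forall_pos hg hgpos).le hfint.le]
        field_simp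
        rw [mul_right_comm, ← Real.rpow_add hfint, add_sub_cancel, Real.rpow_one, mul_comm]
    _ = ∫ x, c ^ (1 - l) * f x := (integral_const_mul _ _).symm
    _ < ∫ x, |w' x| * H (w x) := integral_lt_integral_of_forall_lt (hf.const_mul _)
        (integrable_abs_deriv_mul_comp hw hinj hH) hpointwise
    _ ≤ ∫ x, H x := integral_abs_deriv_mul_comp_le hw hinj hH hH0

namespace StrictLogConcave2

variable {h : ℝ × ℝ → ℝ}

theorem rpow_mul_rpow_lt (h_slc : StrictLogConcave2 h) {x₁ y₁ x₂ y₂ l : ℝ}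
    (hne : (x₁, y₁) ≠ (x₂, y₂)) (hl0 : 0 < l) (hl1 : l < 1) :
    h (x₁, y₁) ^ l * h (x₂, y₂) ^ (1 - l) <
      h (l * x₁ + (1 - l) * x₂, l * y₁ + (1 - l) * y₂) := by
  simpa using h_slc _ _ l hne hl0 hl1

theorem concaveOn_log_slice (h_slc : StrictLogConcave2 h) (h_pos : ∀ p, 0 < h p) (y : ℝ) :
    ConcaveOn ℝ univ fun x => Real.log (h (x, y)) := by
  refine concaveOn_iff_forall_pos.mpr ⟨convex_univ, fun x₁ _ x₂ _ a b ha hb hab => ?_⟩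
  obtain rfl : b = 1 - a := by linarith
  rcases eq_or_ne x₁ x₂ with rfl | hne
  · simp only [smul_eq_mul, ← add_mul, add_sub_cancel, one_mul, le_refl]
  have key := h_slc.rpow_mul_rpow_lt (y₁ := y) (y₂ := y) (by simpa using hne) ha (by linarith)
  have hpow : ∀ x t : ℝ, 0 < h (x, y) ^ t := fun _ t => Real.rpow_pos_of_pos (h_pos _) t
  have hlog := Real.log_le_log (mul_pos (hpow _ _) (hpow _ _)) key.le
  rwa [Real.log_mul (hpow _ _).ne' (hpow _ _).ne', Real.log_rpow (h_pos _),
    Real.log_rpow (h_pos _), ← add_mul, add_sub_cancel, one_mul] at hlog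

theorem continuous_slice (h_slc : StrictLogConcave2 h) (h_pos : ∀ p, 0 < h p) (y : ℝ) :
    Continuous fun x => h (x, y) := by
  have hlog : Continuous fun x => Real.log (h (x, y)) :=
    continuousOn_univ.mp ((h_slc.concaveOn_log_slice h_pos y).continuousOn isOpen_univ)
  simpa only [Real.exp_log (h_pos _)] using hlog.rexp

end StrictLogConcave2

theorem marginal_strictLogConcave_general
    (h : ℝ × ℝ → ℝ)
    (h_pos : ∀ p, 0 < h p)
    (h_slc : StrictLogConcave2 h)
    (hint : ∀ y : ℝ, Integrable (fun x => h (x, y)))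
    (hstar : ℝ → ℝ) (hhstar : ∀ y, hstar y = ∫ x : ℝ, h (x, y)) :
    ∀ y₁ y₂ l : ℝ, y₁ ≠ y₂ → 0 < l → l < 1 →
      hstar (l * y₁ + (1 - l) * y₂) > hstar y₁ ^ l * hstar y₂ ^ (1 - l) := by
  intro y₁ y₂ l hne hl0 hl1
  simp only [hhstar]
  exact integral_rpow_mul_rpow_lt_integral hl0 hl1
    (h_slc.continuous_slice h_pos y₁) (hint y₁) (fun _ => h_pos _)
    (h_slc.continuous_slice h_pos y₂) (hint y₂) (fun _ => h_pos _) (hint _)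
    fun x₁ x₂ => h_slc.rpow_mul_rpow_lt (by simp [hne]) hl0 hl1

theorem marginal_strictLogConcave
    (h : ℝ × ℝ → ℝ)
    (h_pos : ∀ p, 0 < h p)
    (h_slc : StrictLogConcave2 h)
    (hint : ∀ y : ℝ, Integrable (fun x => h (x, y)))
    (hpos_int : ∀ y : ℝ, 0 < ∫ x : ℝ, h (x, y))
    (hstar : ℝ → ℝ) (hhstar : ∀ y, hstar y = ∫ x : ℝ, h (x, y)) :
    ∀ y₁ y₂ l : ℝ, y₁ ≠ y₂ → 0 < l → l < 1 →
      hstar (l * y₁ + (1 - l) * y₂) > hstar y₁ ^ l * hstar y₂ ^ (1 - l) :=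
  marginal_strictLogConcave_general h h_pos h_slc hint hstar hhstar
end

section
/- Let f be a continuously differentiable, strictly log-concave probability density function on ℝ that is positive everywhere, and let F(x) = ∫_{-∞}^x f(t) dt be its CDF. Then F is strictly log-concave, i.e., (ln F)'' < 0 everywhere; equivalently, f'(x)F(x) - f(x)² < 0 for all x. -/
open MeasureTheory

theorem cdf_strictLogConcave
    (f f' : ℝ → ℝ)
    (hf_pos : ∀ x, 0 < f x)
    (hderiv : ∀ x, HasDerivAt f (f' x) x)
    (hf'_cont : Continuous f')
    (hf_int : Integrable f)
    (hf_one : ∫ x : ℝ, f x = 1)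
    (hslc : StrictAnti (fun x => f' x / f x))
    (hlim : Filter.Tendsto f Filter.atBot (nhds 0)) :
    ∀ x : ℝ, f' x * (∫ t in Set.Iic x, f t) - (f x) ^ 2 < 0 := by
  intro x
  have hFnonneg : 0 ≤ ∫ t in Set.Iic x, f t :=
    setIntegral_nonneg measurableSet_Iic (fun t _ => (hf_pos t).le)
  rcases le_or_gt (f' x) 0 with hx' | hx'
  · have h1 : f' x * (∫ t in Set.Iic x, f t) ≤ 0 := mul_nonpos_of_nonpos_of_nonneg hx' hFnonneg
    have h2 : 0 < (f x) ^ 2 := pow_pos (hf_pos x) 2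
    linarith
  · -- f' is positive on Iic x
    have hpos : ∀ t ∈ Set.Iic x, 0 < f' t := by
      intro t ht
      have ht' : t ≤ x := ht
      rcases ht'.eq_or_lt with rfl | hlt
      · exact hx'
      · have h := hslc hlt
        have hq : 0 < f' t / f t := lt_trans (div_pos hx' (hf_pos x)) h
        have := mul_pos hq (hf_pos t)
        rwa [div_mul_cancel₀ _ (hf_pos t).ne'] at this
    -- f' is integrable on Iic x
    have hint' : IntegrableOn f' (Set.Iic x) := by
      apply integrableOn_Iic_of_intervalIntegral_norm_bounded (f x) x
        (a := fun a : ℝ => a) (l := Filter.atBot)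
        (fun a => hf'_cont.integrableOn_Ioc) Filter.tendsto_id
      filter_upwards [Filter.eventually_le_atBot x] with a ha
      have hnorm : ∫ t in a..x, ‖f' t‖ = ∫ t in a..x, f' t := by
        apply intervalIntegral.integral_congr
        intro t ht
        rw [Set.uIcc_of_le ha] at ht
        exact Real.norm_of_nonneg (hpos t ht.2).le
      have heq : ∫ t in a..x, f' t = f x - f a := by
        apply intervalIntegral.integral_eq_sub_of_hasDerivAt (fun t _ => hderiv t)
        exact hf'_cont.intervalIntegrable a x
      rw [hnorm, heq]
      have := hf_pos a
      linarith
    have hF' : ∫ t in Set.Iic x, f' t = f x := by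
      rw [integral_Iic_of_hasDerivAt_of_tendsto' (fun t _ => hderiv t) hint' hlim, sub_zero]
    -- the key strict inequality
    set g : ℝ → ℝ := fun t => f x * f' t - f' x * f t with hg
    have hg_int : IntegrableOn g (Set.Iic x) :=
      (hint'.const_mul (f x)).sub ((hf_int.integrableOn).const_mul (f' x))
    have hg_nonneg : ∀ t ∈ Set.Iic x, 0 ≤ g t := by
      intro t ht
      have h := (hslc.antitone ht : f' x / f x ≤ f' t / f t)
      have := (div_le_div_iff₀ (hf_pos x) (hf_pos t)).mp h
      simp only [hg]
      nlinarith
    have hg_pos : ∀ t ∈ Set.Iio x, 0 < g t := by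
      intro t ht
      have h := hslc ht
      have := (div_lt_div_iff₀ (hf_pos x) (hf_pos t)).mp h
      simp only [hg]
      nlinarith
    have hIpos : 0 < ∫ t in Set.Iic x, g t := by
      rw [setIntegral_pos_iff_support_of_nonneg_ae ?_ hg_int]
      · refine lt_of_lt_of_le ?_ (measure_mono (s := Set.Iio x) ?_)
        · simp [Real.volume_Iio]
        · intro t ht
          exact ⟨(hg_pos t ht).ne', Set.mem_Iic.mpr (Set.mem_Iio.mp ht).le⟩
      · rw [Filter.EventuallyLE, ae_restrict_iff' measurableSet_Iic]
        exact Filter.Eventually.of_forall (fun t ht => hg_nonneg t ht)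
    have hsplit : ∫ t in Set.Iic x, g t
        = f x * (∫ t in Set.Iic x, f' t) - f' x * (∫ t in Set.Iic x, f t) := by
      rw [integral_sub (hint'.const_mul (f x)) ((hf_int.integrableOn).const_mul (f' x)),
        integral_const_mul, integral_const_mul]
    rw [hsplit, hF'] at hIpos
    nlinarith
end

section
/- Suppose in the equality analysis of the Prékopa–Leindler inequality there exist a > 0, b ∈ ℝ, and y₁ < y₂ such that for almost every x ∈ ℝ: g(x)/g(x+b) = a·f(y₂-x-b)/f((y₁+y₂)/2 - x) = a·f((y₁+y₂)/2 - x - b)/f(y₁-x), where f is positive and strictly log-concave. Then b = (y₂-y₁)/2 and consequently g(x)/g(x + (y₂-y₁)/2) = a for almost every x; in particular g cannot be strictly log-concave. -/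
open MeasureTheory

/-!
Two continuous functions that agree almost everywhere agree everywhere, so the two expressions
for `g x / g (x + b)` give, at `x = y₁`, the identity `f (2d - b) * f 0 = f (d - b) * f d` with
`d = (y₂ - y₁) / 2`. Both pairs of points have the same midpoint, and for a strictly log-concave
`f` the product `f x * f y` at fixed midpoint strictly decreases as `|x - y|` grows; hence
`|2d - b| = |b|`, i.e. `b = d`. Then `g x / g (x + d) = a` for every `x`, so
`g 0 * g (2d) = g d * g d`, which strict log-concavity of `g` forbids in the same way.
-/

namespace StrictLogConcave

variable {f : ℝ → ℝ}

theorem mul_lt_mul_of_mem_Ioo (hf : StrictLogConcave f) (hpos : ∀ x, 0 < f x) {x y t : ℝ}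
    (hxy : x ≠ y) (ht₀ : 0 < t) (ht₁ : t < 1) :
    f x * f y < f (t * x + (1 - t) * y) * f ((1 - t) * x + t * y) := by
  have h₁ := hf x y t hxy ht₀ ht₁
  have h₂ := hf x y (1 - t) hxy (by linarith) (by linarith)
  rw [sub_sub_cancel] at h₂
  calc f x * f y = (f x ^ t * f y ^ (1 - t)) * (f x ^ (1 - t) * f y ^ t) := by
        rw [mul_mul_mul_comm, ← Real.rpow_add (hpos x), ← Real.rpow_add (hpos y),
          add_sub_cancel, sub_add_cancel, Real.rpow_one, Real.rpow_one]
    _ < _ := mul_lt_mul'' h₁ h₂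
        (mul_pos (Real.rpow_pos_of_pos (hpos x) _) (Real.rpow_pos_of_pos (hpos y) _)).le
        (mul_pos (Real.rpow_pos_of_pos (hpos x) _) (Real.rpow_pos_of_pos (hpos y) _)).le

theorem mul_lt_mul_of_abs_sub_lt (hf : StrictLogConcave f) (hpos : ∀ x, 0 < f x)
    {x y x' y' : ℝ} (hsum : x + y = x' + y') (hlt : |x' - y'| < |x - y|) :
    f x * f y < f x' * f y' := by
  have hxy : x - y ≠ 0 := abs_pos.mp ((abs_nonneg _).trans_lt hlt)
  set r := (x' - y') / (x - y)
  have hr : r * (x - y) = x' - y' := div_mul_cancel₀ _ hxy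
  have hr_abs : |r| < 1 := by rwa [abs_div, div_lt_one (abs_pos.mpr hxy)]
  obtain ⟨hr₀, hr₁⟩ := abs_lt.mp hr_abs
  have key := hf.mul_lt_mul_of_mem_Ioo hpos (sub_ne_zero.mp hxy)
    (t := (1 + r) / 2) (by linarith) (by linarith)
  rwa [show (1 + r) / 2 * x + (1 - (1 + r) / 2) * y = x' by linear_combination (hsum + hr) / 2,
    show (1 - (1 + r) / 2) * x + (1 + r) / 2 * y = y' by linear_combination (hsum - hr) / 2]
    at key

theorem mul_ne_mul_of_abs_sub_ne (hf : StrictLogConcave f) (hpos : ∀ x, 0 < f x)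
    {x y x' y' : ℝ} (hsum : x + y = x' + y') (hne : |x - y| ≠ |x' - y'|) :
    f x * f y ≠ f x' * f y' := by
  rcases hne.lt_or_gt with h | h
  · exact (hf.mul_lt_mul_of_abs_sub_lt hpos hsum.symm h).ne'
  · exact (hf.mul_lt_mul_of_abs_sub_lt hpos hsum h).ne

end StrictLogConcave

theorem not_strictLogConcave_of_div_add_eq {g : ℝ → ℝ} (hpos : ∀ x, 0 < g x) {a d : ℝ}
    (hd : d ≠ 0) (h : ∀ x, g x / g (x + d) = a) : ¬ StrictLogConcave g := by
  intro hg
  have h₀ := h 0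
  have h₁ := h d
  rw [zero_add, div_eq_iff (hpos _).ne'] at h₀
  rw [div_eq_iff (hpos _).ne'] at h₁
  refine hg.mul_ne_mul_of_abs_sub_ne hpos (x := 0) (y := d + d) (x' := d) (y' := d) (by ring)
    ?_ (by rw [h₀, h₁]; ring)
  rw [sub_self, abs_zero, abs_ne_zero]
  intro h
  exact hd (by linarith)

theorem prekopa_leindler_equality_analysis
    (f g : ℝ → ℝ)
    (hf_cont : Continuous f) (hg_cont : Continuous g)
    (hf_pos : ∀ x, 0 < f x) (hg_pos : ∀ x, 0 < g x)
    (hf_slc : StrictLogConcave f)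
    (a b y₁ y₂ : ℝ) (ha : 0 < a) (hy : y₁ < y₂)
    (hcond1 : ∀ᵐ x : ℝ, g x / g (x + b) = a * f (y₂ - x - b) / f ((y₁ + y₂) / 2 - x))
    (hcond2 : ∀ᵐ x : ℝ, g x / g (x + b) = a * f ((y₁ + y₂) / 2 - x - b) / f (y₁ - x)) :
    b = (y₂ - y₁) / 2 ∧ (∀ᵐ x : ℝ, g x / g (x + (y₂ - y₁) / 2) = a) ∧
      ¬ StrictLogConcave g := by
  have hf_ne (x : ℝ) : f x ≠ 0 := (hf_pos x).ne'
  have hg_ne (x : ℝ) : g x ≠ 0 := (hg_pos x).ne'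
  have hratio : ∀ x, a * f (y₂ - x - b) / f ((y₁ + y₂) / 2 - x) =
      a * f ((y₁ + y₂) / 2 - x - b) / f (y₁ - x) :=
    congrFun <| (Continuous.ae_eq_iff_eq volume (by fun_prop (disch := exact fun _ => hf_ne _))
      (by fun_prop (disch := exact fun _ => hf_ne _))).mp <| by
        filter_upwards [hcond1, hcond2] with x h₁ h₂
        rw [← h₁, h₂]
  have hb : b = (y₂ - y₁) / 2 := by
    have h := hratio y₁
    rw [mul_div_assoc, mul_div_assoc, mul_right_inj' ha.ne', div_eq_div_iff (hf_ne _) (hf_ne _)]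
      at h
    by_contra hb
    refine hf_slc.mul_ne_mul_of_abs_sub_ne hf_pos (by ring) (fun habs => hb ?_) h
    rcases abs_eq_abs.mp habs with h | h <;> linarith
  subst hb
  have hshift : ∀ᵐ x : ℝ, g x / g (x + (y₂ - y₁) / 2) = a := by
    filter_upwards [hcond1] with x hx
    rwa [show y₂ - x - (y₂ - y₁) / 2 = (y₁ + y₂) / 2 - x by ring, mul_div_assoc, div_self (hf_ne _),
      mul_one] at hx
  refine ⟨rfl, hshift, ?_⟩
  exact not_strictLogConcave_of_div_add_eq hg_pos (by linarith : (y₂ - y₁) / 2 ≠ 0) <|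
    congrFun <| (Continuous.ae_eq_iff_eq volume (by fun_prop (disch := exact fun _ => hg_ne _))
      continuous_const).mp hshift
end

section
/- Let μ₁, μ₂ be continuous, everywhere-positive, strictly log-concave probability densities on ℝ. Then the function of θ₁ given by Pr(u₁ > u₂) = ∫_ℝ ∫_{x₂}^∞ μ₁(x₁ - θ₁) μ₂(x₂) dx₁ dx₂ is strictly log-concave in θ₁. -/
/-!
For a positive continuous `f`, strict log-concavity is equivalent to strict total positivity of
order two of the kernel `(x, y) ↦ f (x - y)` ("strictly PF₂"), and this property survives
convolution: by Andréief's identity, a 2×2 minor of `∫ f (x - s) g s ds` is the integral of the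
product of a minor of `f` and a minor of `g`, which is nonnegative and positive on a set of
positive measure. Here `P θ = ∫ G (x - θ) μ₂ x` with `G t = ∫_{t}^{∞} μ₁`, and `G` is itself the
convolution of `μ₁` with the indicator of `(-∞, 0)`, which is PF₂ in the non-strict sense.
-/

open MeasureTheory

open Set Real

lemma strictLogConcave_iff_strictConcaveOn_log {f : ℝ → ℝ} (hf : ∀ x, 0 < f x) :
    StrictLogConcave f ↔ StrictConcaveOn ℝ univ (fun x => log (f x)) := by
  have log_geom_mean : ∀ x y l : ℝ,
      log (f x ^ l * f y ^ (1 - l)) = l * log (f x) + (1 - l) * log (f y) := fun x y l => by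
    rw [log_mul (rpow_pos_of_pos (hf x) l).ne' (rpow_pos_of_pos (hf y) _).ne',
      log_rpow (hf x), log_rpow (hf y)]
  have geom_mean_pos : ∀ x y l : ℝ, 0 < f x ^ l * f y ^ (1 - l) := fun x y l =>
    mul_pos (rpow_pos_of_pos (hf x) l) (rpow_pos_of_pos (hf y) _)
  constructor
  · refine fun h => ⟨convex_univ, fun x _ y _ hxy a b ha hb hab => ?_⟩
    obtain rfl : b = 1 - a := by linarith
    have := log_lt_log (geom_mean_pos x y a) (h x y a hxy ha (by linarith))
    simpa [log_geom_mean] using this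
  · intro h x y l hxy hl₀ hl₁
    have := h.2 (mem_univ x) (mem_univ y) hxy hl₀ (sub_pos.2 hl₁) (add_sub_cancel l 1)
    rw [gt_iff_lt, ← log_lt_log_iff (geom_mean_pos x y l) (hf _), log_geom_mean]
    simpa using this

lemma min_lt_apply_of_midpoint_lt {g : ℝ → ℝ} (hg : Continuous g)
    (hmid : ∀ t ε, 0 < ε → g (t - ε) + g (t + ε) < 2 * g t) {x y z : ℝ} (hxz : x < z)
    (hzy : z < y) : min (g x) (g y) < g z := by
  have no_interior_min : ∀ m ∈ Ioo x y, ¬ IsMinOn g (Icc x y) m := by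
    rintro m ⟨hxm, hmy⟩ hmin
    obtain ⟨ε, hε, hεx, hεy⟩ : ∃ ε, 0 < ε ∧ x ≤ m - ε ∧ m + ε ≤ y :=
      ⟨min (m - x) (y - m), lt_min (sub_pos.2 hxm) (sub_pos.2 hmy),
        by linarith [min_le_left (m - x) (y - m)], by linarith [min_le_right (m - x) (y - m)]⟩
    have h₁ : g m ≤ g (m - ε) := hmin ⟨hεx, by linarith⟩
    have h₂ : g m ≤ g (m + ε) := hmin ⟨by linarith, hεy⟩
    linarith [hmid m ε hε]
  obtain ⟨m, hm, hmin⟩ :=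
    isCompact_Icc.exists_isMinOn (nonempty_Icc.2 (hxz.trans hzy).le) hg.continuousOn
  have hm_end : min (g x) (g y) ≤ g m := by
    rcases hm.1.eq_or_lt with rfl | hxm
    · exact min_le_left _ _
    rcases hm.2.eq_or_lt with rfl | hmy
    · exact min_le_right _ _
    exact absurd hmin (no_interior_min m ⟨hxm, hmy⟩)
  by_contra! hz
  exact no_interior_min z ⟨hxz, hzy⟩ fun t ht => hz.trans (hm_end.trans (hmin ht))

lemma strictConcaveOn_univ_of_midpoint {φ : ℝ → ℝ} (hφ : Continuous φ)
    (hmid : ∀ t ε, 0 < ε → φ (t - ε) + φ (t + ε) < 2 * φ t) : StrictConcaveOn ℝ univ φ := by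
  refine LinearOrder.strictConcaveOn_of_lt convex_univ fun x _ y _ hxy a b ha hb hab => ?_
  obtain rfl : b = 1 - a := by linarith
  -- `k` is the slope of the chord, so `t ↦ φ t - k * t` agrees at `x` and `y`.
  obtain ⟨k, hk⟩ : ∃ k : ℝ, φ x - k * x = φ y - k * y :=
    ⟨(φ y - φ x) / (y - x), by field_simp [(sub_pos.2 hxy).ne']; ring⟩
  have := min_lt_apply_of_midpoint_lt (g := fun t => φ t - k * t) (by fun_prop)
    (fun t ε hε => by linarith [hmid t ε hε]) (x := x) (y := y) (z := a * x + (1 - a) * y)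
    (by nlinarith) (by nlinarith)
  simp only [hk, min_self] at this
  simp only [smul_eq_mul]
  linear_combination this + a * hk

lemma StrictConcaveOn.apply_sub_add_apply_sub_lt {φ : ℝ → ℝ} (hφ : StrictConcaveOn ℝ univ φ)
    {x₁ x₂ y₁ y₂ : ℝ} (hx : x₁ < x₂) (hy : y₁ < y₂) :
    φ (x₁ - y₂) + φ (x₂ - y₁) < φ (x₁ - y₁) + φ (x₂ - y₂) := by
  obtain ⟨l, hl₀, hl₁, hl⟩ : ∃ l : ℝ, 0 < l ∧ 0 < 1 - l ∧ l * (x₂ - y₁ - (x₁ - y₂)) = y₂ - y₁ :=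
    ⟨(y₂ - y₁) / (x₂ - y₁ - (x₁ - y₂)), div_pos (by linarith) (by linarith),
      by rw [sub_pos, div_lt_one (by linarith)]; linarith, div_mul_cancel₀ _ (by linarith)⟩
  have h₁ := hφ.2 (mem_univ (x₁ - y₂)) (mem_univ (x₂ - y₁)) (by linarith) hl₀ hl₁
    (add_sub_cancel l 1)
  have h₂ := hφ.2 (mem_univ (x₁ - y₂)) (mem_univ (x₂ - y₁)) (by linarith) hl₁ hl₀
    (sub_add_cancel 1 l)
  simp only [smul_eq_mul] at h₁ h₂
  rw [show l * (x₁ - y₂) + (1 - l) * (x₂ - y₁) = x₂ - y₂ by linear_combination -hl] at h₁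
  rw [show (1 - l) * (x₁ - y₂) + l * (x₂ - y₁) = x₁ - y₁ by linear_combination hl] at h₂
  linarith

/-- `f` is a Pólya frequency function of order two: the kernel `(x, y) ↦ f (x - y)` is totally
positive of order two. For positive `f` this is log-concavity. -/
def PF2 (f : ℝ → ℝ) : Prop :=
  ∀ ⦃x₁ x₂ y₁ y₂ : ℝ⦄, x₁ < x₂ → y₁ < y₂ → f (x₁ - y₂) * f (x₂ - y₁) ≤ f (x₁ - y₁) * f (x₂ - y₂)

def StrictPF2 (f : ℝ → ℝ) : Prop :=
  ∀ ⦃x₁ x₂ y₁ y₂ : ℝ⦄, x₁ < x₂ → y₁ < y₂ → f (x₁ - y₂) * f (x₂ - y₁) < f (x₁ - y₁) * f (x₂ - y₂)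

lemma StrictPF2.pf2 {f : ℝ → ℝ} (hf : StrictPF2 f) : PF2 f :=
  fun _ _ _ _ hx hy => (hf hx hy).le

lemma StrictPF2.comp_neg {f : ℝ → ℝ} (hf : StrictPF2 f) : StrictPF2 (fun x => f (-x)) := by
  intro x₁ x₂ y₁ y₂ hx hy
  have := hf hy hx
  simp only [neg_sub]
  linarith

lemma StrictPF2.pos_of_nonneg {f : ℝ → ℝ} (hf : StrictPF2 f) (hf₀ : ∀ x, 0 ≤ f x) (x : ℝ) :
    0 < f x := by
  have := hf (lt_add_one x) zero_lt_one
  simp only [sub_zero, add_sub_cancel_right] at this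
  refine (hf₀ x).lt_of_ne fun h => ?_
  rw [← h, zero_mul] at this
  exact this.not_ge (mul_nonneg (hf₀ _) (hf₀ _))

lemma StrictLogConcave.strictPF2 {f : ℝ → ℝ} (hf : ∀ x, 0 < f x) (h : StrictLogConcave f) :
    StrictPF2 f := by
  intro x₁ x₂ y₁ y₂ hx hy
  have := ((strictLogConcave_iff_strictConcaveOn_log hf).1 h).apply_sub_add_apply_sub_lt hx hy
  rwa [← log_mul (hf _).ne' (hf _).ne', ← log_mul (hf _).ne' (hf _).ne',
    log_lt_log_iff (mul_pos (hf _) (hf _)) (mul_pos (hf _) (hf _))] at this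

lemma StrictPF2.strictLogConcave {f : ℝ → ℝ} (hf : ∀ x, 0 < f x) (hc : Continuous f)
    (h : StrictPF2 f) : StrictLogConcave f := by
  rw [strictLogConcave_iff_strictConcaveOn_log hf]
  refine strictConcaveOn_univ_of_midpoint (hc.log fun x => (hf x).ne') fun t ε hε => ?_
  have := h (lt_add_of_pos_right t hε) hε
  simp only [sub_zero, add_sub_cancel_right] at this
  rw [two_mul, ← log_mul (hf _).ne' (hf _).ne', ← log_mul (hf _).ne' (hf _).ne']
  exact log_lt_log (mul_pos (hf _) (hf _)) this

section MinorProduct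

variable {α : Type*}

def minorProduct (φ₁ φ₂ ψ₁ ψ₂ : α → ℝ) (z : α × α) : ℝ :=
  (φ₁ z.1 * φ₂ z.2 - φ₁ z.2 * φ₂ z.1) * (ψ₁ z.1 * ψ₂ z.2 - ψ₁ z.2 * ψ₂ z.1)

lemma minorProduct_eq (φ₁ φ₂ ψ₁ ψ₂ : α → ℝ) : minorProduct φ₁ φ₂ ψ₁ ψ₂ =
    ((fun z : α × α => (φ₁ z.1 * ψ₁ z.1) * (φ₂ z.2 * ψ₂ z.2))
      + fun z => (φ₂ z.1 * ψ₂ z.1) * (φ₁ z.2 * ψ₁ z.2))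
    - ((fun z => (φ₁ z.1 * ψ₂ z.1) * (φ₂ z.2 * ψ₁ z.2))
      + fun z => (φ₂ z.1 * ψ₁ z.1) * (φ₁ z.2 * ψ₂ z.2)) := by
  ext z; simp only [minorProduct, Pi.add_apply, Pi.sub_apply]; ring

lemma minorProduct_swap (φ₁ φ₂ ψ₁ ψ₂ : α → ℝ) (z : α × α) :
    minorProduct φ₁ φ₂ ψ₁ ψ₂ z.swap = minorProduct φ₁ φ₂ ψ₁ ψ₂ z := by
  simp only [minorProduct, Prod.fst_swap, Prod.snd_swap]; ring

lemma minorProduct_nonneg [LinearOrder α] {φ₁ φ₂ ψ₁ ψ₂ : α → ℝ}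
    (h : ∀ s t, s < t → 0 ≤ minorProduct φ₁ φ₂ ψ₁ ψ₂ (s, t)) : 0 ≤ minorProduct φ₁ φ₂ ψ₁ ψ₂ := by
  rintro ⟨s, t⟩
  rcases lt_trichotomy s t with hst | rfl | hts
  · exact h s t hst
  · simp [minorProduct]
  · rw [← minorProduct_swap]; exact h t s hts

variable [MeasurableSpace α] {μ : Measure α} {φ₁ φ₂ ψ₁ ψ₂ : α → ℝ}

lemma integrable_minorProduct (h₁₁ : Integrable (fun s => φ₁ s * ψ₁ s) μ)
    (h₁₂ : Integrable (fun s => φ₁ s * ψ₂ s) μ) (h₂₁ : Integrable (fun s => φ₂ s * ψ₁ s) μ)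
    (h₂₂ : Integrable (fun s => φ₂ s * ψ₂ s) μ) :
    Integrable (minorProduct φ₁ φ₂ ψ₁ ψ₂) (μ.prod μ) := by
  rw [minorProduct_eq]
  exact ((h₁₁.mul_prod h₂₂).add (h₂₂.mul_prod h₁₁)).sub ((h₁₂.mul_prod h₂₁).add (h₂₁.mul_prod h₁₂))

/-- The two-dimensional case of Andréief's identity. -/
lemma integral_minorProduct [SFinite μ] (h₁₁ : Integrable (fun s => φ₁ s * ψ₁ s) μ)
    (h₁₂ : Integrable (fun s => φ₁ s * ψ₂ s) μ) (h₂₁ : Integrable (fun s => φ₂ s * ψ₁ s) μ)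
    (h₂₂ : Integrable (fun s => φ₂ s * ψ₂ s) μ) :
    ∫ z, minorProduct φ₁ φ₂ ψ₁ ψ₂ z ∂μ.prod μ =
      2 * ((∫ s, φ₁ s * ψ₁ s ∂μ) * (∫ s, φ₂ s * ψ₂ s ∂μ)
        - (∫ s, φ₁ s * ψ₂ s ∂μ) * (∫ s, φ₂ s * ψ₁ s ∂μ)) := by
  rw [minorProduct_eq, integral_sub' ((h₁₁.mul_prod h₂₂).add (h₂₂.mul_prod h₁₁))
      ((h₁₂.mul_prod h₂₁).add (h₂₁.mul_prod h₁₂)),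
    integral_add' (h₁₁.mul_prod h₂₂) (h₂₂.mul_prod h₁₁),
    integral_add' (h₁₂.mul_prod h₂₁) (h₂₁.mul_prod h₁₂),
    integral_prod_mul (fun s => φ₁ s * ψ₁ s) (fun s => φ₂ s * ψ₂ s),
    integral_prod_mul (fun s => φ₂ s * ψ₂ s) (fun s => φ₁ s * ψ₁ s),
    integral_prod_mul (fun s => φ₁ s * ψ₂ s) (fun s => φ₂ s * ψ₁ s),
    integral_prod_mul (fun s => φ₂ s * ψ₁ s) (fun s => φ₁ s * ψ₂ s)]
  ring

lemma integral_mul_integral_lt_of_minorProduct [SFinite μ]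
    (h₁₁ : Integrable (fun s => φ₁ s * ψ₁ s) μ)
    (h₁₂ : Integrable (fun s => φ₁ s * ψ₂ s) μ) (h₂₁ : Integrable (fun s => φ₂ s * ψ₁ s) μ)
    (h₂₂ : Integrable (fun s => φ₂ s * ψ₂ s) μ) (hF : 0 ≤ minorProduct φ₁ φ₂ ψ₁ ψ₂)
    (hpos : 0 < μ.prod μ {z | 0 < minorProduct φ₁ φ₂ ψ₁ ψ₂ z}) :
    (∫ s, φ₁ s * ψ₂ s ∂μ) * (∫ s, φ₂ s * ψ₁ s ∂μ)
      < (∫ s, φ₁ s * ψ₁ s ∂μ) * (∫ s, φ₂ s * ψ₂ s ∂μ) := by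
  have := (integral_pos_iff_support_of_nonneg hF (integrable_minorProduct h₁₁ h₁₂ h₂₁ h₂₂)).2
    (hpos.trans_le (measure_mono fun z hz => ne_of_gt hz))
  rw [integral_minorProduct h₁₁ h₁₂ h₂₁ h₂₂] at this
  linarith

end MinorProduct

lemma volume_pos_of_Ioo_prod_Ioo_subset {S : Set (ℝ × ℝ)} {a b c d : ℝ} (hab : a < b)
    (hcd : c < d) (h : Ioo a b ×ˢ Ioo c d ⊆ S) : 0 < volume S := by
  refine lt_of_lt_of_le ?_ (measure_mono h)
  rw [Measure.volume_eq_prod, Measure.prod_prod, Real.volume_Ioo, Real.volume_Ioo]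
  exact ENNReal.mul_pos (by simpa using hab) (by simpa using hcd)

theorem strictPF2_convolution {f g : ℝ → ℝ} (hf : PF2 f) (hg : StrictPF2 g)
    (hf_strict : ∀ ⦃x₁ x₂ : ℝ⦄, x₁ < x₂ → 0 < volume
      {p : ℝ × ℝ | p.1 < p.2 ∧ f (x₁ - p.2) * f (x₂ - p.1) < f (x₁ - p.1) * f (x₂ - p.2)})
    (hint : ∀ x, Integrable fun s => f (x - s) * g s) :
    StrictPF2 fun x => ∫ s, f (x - s) * g s := by
  intro x₁ x₂ y₁ y₂ hx hy
  have shift : ∀ x y, Integrable (fun s => f (x - s) * g (s - y)) ∧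
      ∫ s, f (x - s) * g (s - y) = ∫ s, f (x - y - s) * g s := by
    intro x y
    have e : (fun s => f (x - s) * g (s - y)) = fun s => f (x - y - (s - y)) * g (s - y) := by
      simp only [sub_sub_sub_cancel_right]
    rw [e]
    exact ⟨(hint (x - y)).comp_sub_right y,
      integral_sub_right_eq_self (fun s => f (x - y - s) * g s) y⟩
  have minor_g : ∀ s t, s < t → 0 < g (s - y₁) * g (t - y₂) - g (t - y₁) * g (s - y₂) :=
    fun s t hst => sub_pos.2 (by linarith [hg hst hy])
  have hF : 0 ≤ minorProduct (fun s => f (x₁ - s)) (fun s => f (x₂ - s)) (fun s => g (s - y₁))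
      (fun s => g (s - y₂)) :=
    minorProduct_nonneg fun s t hst =>
      mul_nonneg (sub_nonneg.2 (hf hx hst)) (minor_g s t hst).le
  have hpos := (hf_strict hx).trans_le (measure_mono fun p ⟨hp, hfp⟩ =>
    mul_pos (sub_pos.2 hfp) (minor_g p.1 p.2 hp))
  have := integral_mul_integral_lt_of_minorProduct (shift x₁ y₁).1 (shift x₁ y₂).1
    (shift x₂ y₁).1 (shift x₂ y₂).1 hF hpos
  simpa only [(shift _ _).2] using this

theorem StrictPF2.convolution {f g : ℝ → ℝ} (hf : StrictPF2 f) (hg : StrictPF2 g)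
    (hint : ∀ x, Integrable fun s => f (x - s) * g s) :
    StrictPF2 fun x => ∫ s, f (x - s) * g s :=
  strictPF2_convolution hf.pf2 hg (fun _ _ hx => volume_pos_of_Ioo_prod_Ioo_subset zero_lt_one
    one_lt_two fun _ ⟨hp₁, hp₂⟩ => ⟨hp₁.2.trans hp₂.1, hf hx (hp₁.2.trans hp₂.1)⟩) hint

lemma integrable_comp_sub_mul {f g : ℝ → ℝ} {C : ℝ} (hf : Measurable f) (hC : ∀ x, ‖f x‖ ≤ C)
    (hg : Integrable g) (x : ℝ) : Integrable fun s => f (x - s) * g s :=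
  hg.bdd_mul (hf.comp (measurable_const.sub measurable_id)).aestronglyMeasurable
    (ae_of_all _ fun s => hC (x - s))

lemma continuous_integral_comp_sub_mul {f g : ℝ → ℝ} {C : ℝ} (hf : Continuous f)
    (hC : ∀ x, ‖f x‖ ≤ C) (hg : Integrable g) : Continuous fun x => ∫ s, f (x - s) * g s := by
  have := BddAbove.continuous_convolution_left_of_integrable (L := ContinuousLinearMap.mul ℝ ℝ)
    (μ := volume) ⟨C, by rintro _ ⟨x, rfl⟩; exact hC x⟩ hf hg
  convert this using 1
  exact funext fun x => convolution_mul_swap.symm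

lemma pf2_indicator_Iio : PF2 ((Iio (0 : ℝ)).indicator 1) := by
  intro x₁ x₂ y₁ y₂ hx hy
  simp only [indicator_apply, mem_Iio, sub_neg, Pi.one_apply]
  split_ifs <;> norm_num <;> linarith

lemma integral_Ioi_eq_integral_indicator_mul (f : ℝ → ℝ) (t : ℝ) :
    ∫ s in Ioi t, f s = ∫ s, (Iio (0 : ℝ)).indicator 1 (t - s) * f s := by
  rw [← integral_indicator measurableSet_Ioi]
  congr 1 with s
  simp [indicator_apply, sub_neg]

lemma StrictPF2.integral_Ioi {f : ℝ → ℝ} (hf : StrictPF2 f) (hint : Integrable f) :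
    StrictPF2 fun t => ∫ s in Ioi t, f s := by
  simp only [integral_Ioi_eq_integral_indicator_mul]
  refine strictPF2_convolution pf2_indicator_Iio hf (fun x₁ x₂ hx => ?_)
    (integrable_comp_sub_mul (C := 1) (measurable_one.indicator measurableSet_Iio)
      (fun x => norm_indicator_le_norm_self 1 x |>.trans (by simp)) hint)
  refine volume_pos_of_Ioo_prod_Ioo_subset hx (lt_add_one x₂) fun p ⟨hp₁, hp₂⟩ => ?_
  obtain ⟨h₁, h₂⟩ := hp₁
  obtain ⟨h₃, -⟩ := hp₂
  refine ⟨h₂.trans h₃, ?_⟩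
  simp [indicator_apply, sub_neg, h₁, h₃, h₂.not_gt]

lemma continuous_integral_Ioi {f : ℝ → ℝ} (hf : Integrable f) :
    Continuous fun t => ∫ s in Ioi t, f s := by
  have : (fun t => ∫ s in Ioi t, f s) = fun t => (∫ s in Ioi 0, f s) - ∫ s in (0 : ℝ)..t, f s := by
    funext t
    rw [← intervalIntegral.integral_Ioi_sub_Ioi' hf.integrableOn hf.integrableOn]
    ring
  rw [this]
  exact continuous_const.sub (hf.continuous_primitive 0)

lemma integral_Ioi_comp_sub (f : ℝ → ℝ) (a c : ℝ) :
    ∫ x in Ioi a, f (x - c) = ∫ x in Ioi (a - c), f x := by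
  rw [← integral_indicator measurableSet_Ioi, ← integral_indicator measurableSet_Ioi,
    ← integral_sub_right_eq_self (fun x => (Ioi (a - c)).indicator f x) c]
  congr 1 with x
  simp [indicator_apply]

theorem pairwise_probability_strictLogConcave_general
    (μ₁ μ₂ : ℝ → ℝ)
    (h₁_pos : ∀ x, 0 < μ₁ x) (h₂_pos : ∀ x, 0 < μ₂ x)
    (h₁_int : ∫ x : ℝ, μ₁ x = 1) (h₂_int : ∫ x : ℝ, μ₂ x = 1)
    (h₁_slc : StrictLogConcave μ₁) (h₂_slc : StrictLogConcave μ₂)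
    (P : ℝ → ℝ)
    (hP : ∀ θ₁ : ℝ, P θ₁ = ∫ x₂ : ℝ, (∫ x₁ in Set.Ioi x₂, μ₁ (x₁ - θ₁)) * μ₂ x₂) :
    StrictLogConcave P := by
  have hμ₁ := integrable_of_integral_eq_one h₁_int
  have hμ₂ := integrable_of_integral_eq_one h₂_int
  set F : ℝ → ℝ := fun t => ∫ s in Ioi (-t), μ₁ s with hF
  have hF_nonneg : ∀ t, 0 ≤ F t := fun t =>
    setIntegral_nonneg measurableSet_Ioi fun s _ => (h₁_pos s).le
  have hF_le : ∀ t, ‖F t‖ ≤ 1 := fun t => by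
    rw [Real.norm_of_nonneg (hF_nonneg t), ← h₁_int]
    exact setIntegral_le_integral hμ₁ (ae_of_all _ fun s => (h₁_pos s).le)
  have hF_cont : Continuous F := (continuous_integral_Ioi hμ₁).comp continuous_neg
  have hP_conv : P = fun θ => ∫ x, F (θ - x) * μ₂ x := by
    funext θ
    rw [hP θ]
    simp only [hF, integral_Ioi_comp_sub, neg_sub]
  have hP_PF2 : StrictPF2 P := by
    rw [hP_conv]
    exact ((h₁_slc.strictPF2 h₁_pos).integral_Ioi hμ₁).comp_neg.convolution
      (h₂_slc.strictPF2 h₂_pos) (integrable_comp_sub_mul hF_cont.measurable hF_le hμ₂)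
  have hP_nonneg : ∀ θ, 0 ≤ P θ := fun θ => by
    rw [hP_conv]
    exact integral_nonneg fun x => mul_nonneg (hF_nonneg _) (h₂_pos x).le
  have hP_cont : Continuous P := by
    rw [hP_conv]
    exact continuous_integral_comp_sub_mul hF_cont hF_le hμ₂
  exact hP_PF2.strictLogConcave (hP_PF2.pos_of_nonneg hP_nonneg) hP_cont

theorem pairwise_probability_strictLogConcave
    (μ₁ μ₂ : ℝ → ℝ)
    (h₁_cont : Continuous μ₁) (h₂_cont : Continuous μ₂)
    (h₁_pos : ∀ x, 0 < μ₁ x) (h₂_pos : ∀ x, 0 < μ₂ x)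
    (h₁_int : ∫ x : ℝ, μ₁ x = 1) (h₂_int : ∫ x : ℝ, μ₂ x = 1)
    (h₁_slc : StrictLogConcave μ₁) (h₂_slc : StrictLogConcave μ₂)
    (P : ℝ → ℝ)
    (hP : ∀ θ₁ : ℝ, P θ₁ = ∫ x₂ : ℝ, (∫ x₁ in Set.Ioi x₂, μ₁ (x₁ - θ₁)) * μ₂ x₂) :
    StrictLogConcave P :=
  pairwise_probability_strictLogConcave_general μ₁ μ₂ h₁_pos h₂_pos h₁_int h₂_int h₁_slc h₂_slc P hP
end

section
/- Let π₂ be a positive probability density on ℝ with CDF F₂. If F₂(B+1)/(1 - F₂(B+1)) can be made arbitrarily large by choosing B large, and π₁ is a positive density with (ln π₁)' monotonically decreasing and tending to +∞ as x → -∞, then lim_{θ₁→∞} [∫ π₁(u-θ₁) F₂(u)(1-F₃(u)) du] / [∫ π₁(u-θ₁)(1-F₂(u))(1-F₃(u)) du] = +∞, where F₃ is the CDF of a third positive density π₃. -/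
open MeasureTheory Filter Set Real

/-!
Fix a level `M ≥ 0` and choose `A` with `F₂ A ≥ 2M (1 - F₂ A)`; for `u > A` the numerator
integrand is then at least `2M` times the denominator integrand. Put
`c = (1 - F₂ (A + 1)) (1 - F₃ (A + 1))`. For large `θ` the weight `π₁ (u - θ)`, `u ≤ A + 1`, is read
in the left tail of `π₁`, where `(log π₁)' ≥ c⁻¹`: there `π₁` increases and decays to the left at
least like `exp (c⁻¹ u)`. So the denominator over `u ≤ A` is at most `c π₁ (A - θ)`, which is at
most its part over `(A, A + 1]`. Hence the denominator is at most twice its part over `u > A`, and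
the ratio is at least `M`.
-/

lemma integral_Iic_mem_Ioo {ρ : ℝ → ℝ} (hpos : ∀ x, 0 < ρ x) (hint : ∫ x, ρ x = 1) (x : ℝ) :
    ∫ t in Iic x, ρ t ∈ Ioo 0 1 := by
  have hρ : Integrable ρ := .of_integral_ne_zero (by simp [hint])
  have hsplit : (∫ t in Iic x, ρ t) + ∫ t in Ioi x, ρ t = 1 :=
    (intervalIntegral.integral_Iic_add_Ioi hρ.integrableOn hρ.integrableOn).trans hint
  have hsupp : Function.support ρ = univ := eq_univ_of_forall fun t => (hpos t).ne'
  have hpos_on {s : Set ℝ} (hs : volume s ≠ 0) : 0 < ∫ t in s, ρ t := by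
    rw [setIntegral_pos_iff_support_of_nonneg_ae (.of_forall fun t => (hpos t).le) hρ.integrableOn,
      hsupp, univ_inter]
    exact pos_iff_ne_zero.2 hs
  have hleft := hpos_on (s := Iic x) (by simp)
  have hright := hpos_on (s := Ioi x) (by simp)
  exact ⟨hleft, by linarith⟩

lemma monotone_and_mem_Ioo_of_eq_integral_Iic {ρ F : ℝ → ℝ} (hpos : ∀ x, 0 < ρ x)
    (hint : ∫ x, ρ x = 1) (hF : ∀ x, F x = ∫ t in Iic x, ρ t) :
    Monotone F ∧ ∀ x, F x ∈ Ioo 0 1 := by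
  refine ⟨fun x y hxy => ?_, fun x => hF x ▸ integral_Iic_mem_Ioo hpos hint x⟩
  rw [hF, hF]
  exact setIntegral_mono_set (Integrable.of_integral_ne_zero (by simp [hint])).integrableOn
    (.of_forall fun t => (hpos t).le) (Iic_subset_Iic.2 hxy).eventuallyLE

lemma mul_one_sub_le_of_le_odds {F : ℝ → ℝ} (hF : Monotone F) (hF1 : ∀ x, F x < 1) {m a u : ℝ}
    (hm : 0 ≤ m) (ha : m ≤ F a / (1 - F a)) (hu : a ≤ u) : m * (1 - F u) ≤ F u :=
  calc m * (1 - F u) ≤ m * (1 - F a) := by gcongr; exact hF hu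
    _ ≤ F a := (le_div_iff₀ (sub_pos.2 (hF1 a))).1 ha
    _ ≤ F u := hF hu

lemma le_mul_exp_of_le_deriv_log {f d : ℝ → ℝ} {K a x y : ℝ} (hf : ∀ x ≤ a, 0 < f x)
    (hd : ∀ x ≤ a, HasDerivAt (fun x => log (f x)) (d x) x) (hK : ∀ x ≤ a, K ≤ d x)
    (hxy : x ≤ y) (hy : y ≤ a) : f x ≤ f y * exp (K * (x - y)) := by
  have hmono : MonotoneOn (fun x => log (f x) - K * x) (Iic a) := by
    have hderiv (x) (hx : x ≤ a) : HasDerivAt (fun x => log (f x) - K * x) (d x - K) x := by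
      have hlin : HasDerivAt (fun x => K * x) K x := by simpa using (hasDerivAt_id x).const_mul K
      exact (hd x hx).sub hlin
    refine monotoneOn_of_hasDerivWithinAt_nonneg (f' := fun x => d x - K) (convex_Iic a)
      (fun x hx => (hderiv x hx).continuousAt.continuousWithinAt) (fun x hx => ?_) (fun x hx => ?_)
    · rw [interior_Iic] at hx
      exact (hderiv x hx.le).hasDerivWithinAt
    · rw [interior_Iic] at hx
      exact sub_nonneg.2 (hK x hx.le)
  have hlog : log (f x) ≤ log (f y) + K * (x - y) := by
    have := hmono (mem_Iic.2 (hxy.trans hy)) (mem_Iic.2 hy) hxy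
    simp only at this
    linarith
  calc f x = exp (log (f x)) := (exp_log (hf x (hxy.trans hy))).symm
    _ ≤ exp (log (f y) + K * (x - y)) := exp_le_exp.2 hlog
    _ = f y * exp (K * (x - y)) := by rw [exp_add, exp_log (hf y hy)]

lemma setIntegral_Iic_le_of_le_mul_exp {f : ℝ → ℝ} {C K a : ℝ} (hK : 0 < K)
    (hf : IntegrableOn f (Iic a)) (hle : ∀ u ≤ a, f u ≤ C * exp (K * (u - a))) :
    ∫ u in Iic a, f u ≤ C / K := by
  have hexp (u : ℝ) : C * exp (K * (u - a)) = C * exp (-(K * a)) * exp (K * u) := by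
    rw [mul_assoc, ← exp_add]; ring_nf
  calc ∫ u in Iic a, f u ≤ ∫ u in Iic a, C * exp (-(K * a)) * exp (K * u) := by
        refine setIntegral_mono_on hf ((integrableOn_exp_mul_Iic hK a).const_mul _)
          measurableSet_Iic fun u hu => ?_
        rw [← hexp]
        exact hle u hu
    _ = C / K := by
        rw [integral_const_mul, integral_exp_mul_Iic hK, mul_assoc, ← mul_div_assoc, ← exp_add,
          neg_add_cancel, exp_zero, mul_one_div]

section Translate

variable {w g : ℝ → ℝ} {a θ t₀ : ℝ}

lemma setIntegral_Iic_comp_sub_mul_le {d : ℝ → ℝ} {K : ℝ} (hK : 0 < K) (hw : ∀ x, 0 < w x)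
    (hd : ∀ x ≤ t₀, HasDerivAt (fun x => log (w x)) (d x) x) (hKd : ∀ x ≤ t₀, K ≤ d x)
    (hg : ∀ u ≤ a, g u ≤ 1) (hint : IntegrableOn (fun u => w (u - θ) * g u) (Iic a))
    (ha : a - θ ≤ t₀) :
    ∫ u in Iic a, w (u - θ) * g u ≤ w (a - θ) / K :=
  setIntegral_Iic_le_of_le_mul_exp hK hint fun u hu => calc
    w (u - θ) * g u ≤ w (u - θ) := mul_le_of_le_one_right (hw _).le (hg u hu)
    _ ≤ w (a - θ) * exp (K * (u - θ - (a - θ))) :=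
        le_mul_exp_of_le_deriv_log (fun x _ => hw x) hd hKd (by linarith) ha
    _ = w (a - θ) * exp (K * (u - a)) := by ring_nf

lemma mul_le_setIntegral_Ioi_comp_sub_mul {c : ℝ} (hw : MonotoneOn w (Iic t₀))
    (hw0 : ∀ x, 0 ≤ w x) (hg0 : ∀ u > a, 0 ≤ g u) (hc : 0 ≤ c)
    (hgc : ∀ u ∈ Ioc a (a + 1), c ≤ g u) (hint : IntegrableOn (fun u => w (u - θ) * g u) (Ioi a))
    (ha : a + 1 - θ ≤ t₀) :
    w (a - θ) * c ≤ ∫ u in Ioi a, w (u - θ) * g u := by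
  have hle (u) (hu : u ∈ Ioc a (a + 1)) : w (a - θ) * c ≤ w (u - θ) * g u := by
    refine mul_le_mul (hw (mem_Iic.2 ?_) (mem_Iic.2 ?_) ?_) (hgc u hu) hc (hw0 _) <;>
      linarith [hu.1, hu.2]
  calc w (a - θ) * c = w (a - θ) * c * volume.real (Ioc a (a + 1)) := by
        rw [Real.volume_real_Ioc_of_le (by linarith), add_sub_cancel_left, mul_one]
    _ ≤ ∫ u in Ioc a (a + 1), w (u - θ) * g u :=
        setIntegral_ge_of_const_le_real measurableSet_Ioc (by simp) hle
          (hint.mono_set Ioc_subset_Ioi_self)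
    _ ≤ ∫ u in Ioi a, w (u - θ) * g u :=
        setIntegral_mono_set hint
          ((ae_restrict_iff' measurableSet_Ioi).2 (.of_forall fun u hu =>
            mul_nonneg (hw0 _) (hg0 u hu)))
          Ioc_subset_Ioi_self.eventuallyLE

lemma setIntegral_Iic_le_setIntegral_Ioi_comp_sub_mul {d : ℝ → ℝ} {c : ℝ} (hc : 0 < c)
    (hw : ∀ x, 0 < w x) (hd : ∀ x ≤ t₀, HasDerivAt (fun x => log (w x)) (d x) x)
    (hdc : ∀ x ≤ t₀, c⁻¹ ≤ d x) (hg : ∀ u, g u ∈ Icc 0 1)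
    (hgc : ∀ u ∈ Ioc a (a + 1), c ≤ g u) (hint : Integrable fun u => w (u - θ) * g u)
    (hθ : a + 1 - θ ≤ t₀) :
    ∫ u in Iic a, w (u - θ) * g u ≤ ∫ u in Ioi a, w (u - θ) * g u ∧
      0 < ∫ u in Ioi a, w (u - θ) * g u := by
  have hmono : MonotoneOn w (Iic t₀) := fun x _ y hy hxy => by
    simpa using le_mul_exp_of_le_deriv_log (K := 0) (fun x _ => hw x) hd
      (fun x hx => (inv_pos.2 hc).le.trans (hdc x hx)) hxy hy
  have hright := mul_le_setIntegral_Ioi_comp_sub_mul hmono (fun x => (hw x).le)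
    (fun u _ => (hg u).1) hc.le hgc hint.integrableOn hθ
  have hleft := setIntegral_Iic_comp_sub_mul_le (inv_pos.2 hc) hw hd hdc (fun u _ => (hg u).2)
    hint.integrableOn (a := a) (by linarith)
  rw [div_inv_eq_mul] at hleft
  exact ⟨hleft.trans hright, (mul_pos (hw _) hc).trans_le hright⟩

end Translate

lemma div_two_le_integral_div_integral {n e : ℝ → ℝ} {a m : ℝ} (hn : Integrable n)
    (he : Integrable e) (hn0 : ∀ u ≤ a, 0 ≤ n u) (he0 : ∀ u ≤ a, 0 ≤ e u) (hm : 0 ≤ m)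
    (hne : ∀ u > a, m * e u ≤ n u) (hleft : ∫ u in Iic a, e u ≤ ∫ u in Ioi a, e u)
    (hright : 0 < ∫ u in Ioi a, e u) :
    m / 2 ≤ (∫ u, n u) / ∫ u, e u := by
  rw [← intervalIntegral.integral_Iic_add_Ioi (b := a) hn.integrableOn hn.integrableOn,
    ← intervalIntegral.integral_Iic_add_Ioi (b := a) he.integrableOn he.integrableOn]
  have hnleft : 0 ≤ ∫ u in Iic a, n u := setIntegral_nonneg measurableSet_Iic hn0
  have heleft : 0 ≤ ∫ u in Iic a, e u := setIntegral_nonneg measurableSet_Iic he0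
  have hnright : m * ∫ u in Ioi a, e u ≤ ∫ u in Ioi a, n u := by
    rw [← integral_const_mul]
    exact setIntegral_mono_on (he.integrableOn.const_mul m) hn.integrableOn measurableSet_Ioi hne
  set E := ∫ u in Ioi a, e u
  calc m / 2 = m * E / (2 * E) := by field_simp
    _ ≤ ((∫ u in Iic a, n u) + ∫ u in Ioi a, n u) / ((∫ u in Iic a, e u) + E) :=
        div_le_div₀ ((mul_nonneg hm hright.le).trans (by linarith)) (by linarith) (by linarith)
          (by linarith)

theorem ratio_tendsto_atTop_general
    (π₁ π₂ π₃ : ℝ → ℝ)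
    (h₁_pos : ∀ x, 0 < π₁ x) (h₂_pos : ∀ x, 0 < π₂ x) (h₃_pos : ∀ x, 0 < π₃ x)
    (h₂_int : ∫ x : ℝ, π₂ x = 1) (h₃_int : ∫ x : ℝ, π₃ x = 1)
    (F₂ F₃ : ℝ → ℝ)
    (hF₂ : ∀ x, F₂ x = ∫ t in Set.Iic x, π₂ t)
    (hF₃ : ∀ x, F₃ x = ∫ t in Set.Iic x, π₃ t)
    (hodds : Tendsto (fun B : ℝ => F₂ (B + 1) / (1 - F₂ (B + 1))) atTop atTop)
    (d : ℝ → ℝ)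
    (hd : ∀ x, HasDerivAt (fun x => Real.log (π₁ x)) (d x) x)
    (hd_lim : Tendsto d atBot atTop)
    (hInt_num : ∀ θ : ℝ, Integrable (fun u => π₁ (u - θ) * (F₂ u * (1 - F₃ u))))
    (hInt_den : ∀ θ : ℝ, Integrable (fun u => π₁ (u - θ) * ((1 - F₂ u) * (1 - F₃ u)))) :
    Tendsto (fun θ : ℝ =>
        (∫ u : ℝ, π₁ (u - θ) * (F₂ u * (1 - F₃ u))) /
        (∫ u : ℝ, π₁ (u - θ) * ((1 - F₂ u) * (1 - F₃ u))))
      atTop atTop := by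
  obtain ⟨hF₂mono, hF₂01⟩ := monotone_and_mem_Ioo_of_eq_integral_Iic h₂_pos h₂_int hF₂
  obtain ⟨hF₃mono, hF₃01⟩ := monotone_and_mem_Ioo_of_eq_integral_Iic h₃_pos h₃_int hF₃
  have hS₃ (u) : 0 ≤ 1 - F₃ u := sub_nonneg.2 (hF₃01 u).2.le
  refine tendsto_atTop.2 fun b => ?_
  obtain ⟨B, hB⟩ := (hodds.eventually_ge_atTop (2 * max b 0)).exists
  set c := (1 - F₂ (B + 1 + 1)) * (1 - F₃ (B + 1 + 1))
  have hc : 0 < c := mul_pos (sub_pos.2 (hF₂01 _).2) (sub_pos.2 (hF₃01 _).2)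
  obtain ⟨t₀, ht₀⟩ := eventually_atBot.1 (hd_lim.eventually_ge_atTop c⁻¹)
  filter_upwards [eventually_ge_atTop (B + 1 + 1 - t₀)] with θ hθ
  have hg (u) : (1 - F₂ u) * (1 - F₃ u) ∈ Icc 0 1 :=
    ⟨mul_nonneg (sub_nonneg.2 (hF₂01 u).2.le) (hS₃ u),
      mul_le_one₀ (by linarith [(hF₂01 u).1]) (hS₃ u) (by linarith [(hF₃01 u).1])⟩
  have hgc (u) (hu : u ∈ Ioc (B + 1) (B + 1 + 1)) : c ≤ (1 - F₂ u) * (1 - F₃ u) :=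
    mul_le_mul (by linarith [hF₂mono hu.2]) (by linarith [hF₃mono hu.2]) (hS₃ _)
      (sub_nonneg.2 (hF₂01 u).2.le)
  have hodds_le (u) (hu : u > B + 1) : 2 * max b 0 * (1 - F₂ u) ≤ F₂ u :=
    mul_one_sub_le_of_le_odds hF₂mono (fun x => (hF₂01 x).2) (by positivity) hB hu.le
  obtain ⟨hleft, hright⟩ := setIntegral_Iic_le_setIntegral_Ioi_comp_sub_mul hc h₁_pos
    (fun x _ => hd x) ht₀ hg hgc (hInt_den θ) (by linarith)
  calc b ≤ 2 * max b 0 / 2 := by simp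
    _ ≤ _ := div_two_le_integral_div_integral (hInt_num θ) (hInt_den θ)
        (fun u _ => mul_nonneg (h₁_pos _).le (mul_nonneg (hF₂01 u).1.le (hS₃ u)))
        (fun u _ => mul_nonneg (h₁_pos _).le (hg u).1) (by positivity)
        (fun u hu => by
          linear_combination mul_le_mul_of_nonneg_left (hodds_le u hu)
            (mul_nonneg (h₁_pos (u - θ)).le (hS₃ u)))
        hleft hright

theorem ratio_tendsto_atTop
    (π₁ π₂ π₃ : ℝ → ℝ)
    (h₁_pos : ∀ x, 0 < π₁ x) (h₂_pos : ∀ x, 0 < π₂ x) (h₃_pos : ∀ x, 0 < π₃ x)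
    (h₁_int : ∫ x : ℝ, π₁ x = 1) (h₂_int : ∫ x : ℝ, π₂ x = 1) (h₃_int : ∫ x : ℝ, π₃ x = 1)
    (F₂ F₃ : ℝ → ℝ)
    (hF₂ : ∀ x, F₂ x = ∫ t in Set.Iic x, π₂ t)
    (hF₃ : ∀ x, F₃ x = ∫ t in Set.Iic x, π₃ t)
    (hodds : Tendsto (fun B : ℝ => F₂ (B + 1) / (1 - F₂ (B + 1))) atTop atTop)
    (d : ℝ → ℝ)
    (hd : ∀ x, HasDerivAt (fun x => Real.log (π₁ x)) (d x) x)
    (hd_anti : StrictAnti d)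
    (hd_lim : Tendsto d atBot atTop)
    (hInt_num : ∀ θ : ℝ, Integrable (fun u => π₁ (u - θ) * (F₂ u * (1 - F₃ u))))
    (hInt_den : ∀ θ : ℝ, Integrable (fun u => π₁ (u - θ) * ((1 - F₂ u) * (1 - F₃ u)))) :
    Tendsto (fun θ : ℝ =>
        (∫ u : ℝ, π₁ (u - θ) * (F₂ u * (1 - F₃ u))) /
        (∫ u : ℝ, π₁ (u - θ) * ((1 - F₂ u) * (1 - F₃ u))))
      atTop atTop :=
  ratio_tendsto_atTop_general π₁ π₂ π₃ h₁_pos h₂_pos h₃_pos h₂_int h₃_int F₂ F₃ hF₂ hF₃ hodds d hd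
    hd_lim hInt_num hInt_den
end
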